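/- For g ∈ G, the composite Γ_{P_{g·x}} ∘ ¥_x equals the map A ↦ U_S(g) A U_S(g)*, and this map is a C*-algebra isomorphism from B(H_S)^{G_x} onto B(H_S)^{G_{g·x}}. -/

import Mathlib

open scoped TensorProduct
noncomputable section

/-- `L²(X)`: the complex Hilbert space of functions `X → ℂ`. -/
abbrev L2 (X : Type*) [Fintype X] := EuclideanSpace ℂ X

/-- The permutation representation of `G` on `L²(X)`, `(g·f)(x) = f(g⁻¹·x)`, as a linear map. -/
def UR_lin {G X : Type*} [Group G] [Fintype X] [MulAction G X] (g : G) :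
    L2 X →ₗ[ℂ] L2 X where
  toFun f := WithLp.toLp 2 (fun y => f (g⁻¹ • y))
  map_add' f₁ f₂ := by ext y; simp
  map_smul' c f := by ext y; simp

/-- The permutation (unitary) representation of `G` on `L²(X)`. -/
def UR (G X : Type*) [Group G] [Fintype X] [MulAction G X] :
    G →* (L2 X →L[ℂ] L2 X) where
  toFun g := (UR_lin g).toContinuousLinearMap
  map_one' := by ext f y; simp [UR_lin]
  map_mul' g h := by ext f y; simp [UR_lin, mul_smul]

/-- The indicator function `δ_y ∈ L²(X)`. -/
def delta {X : Type*} [Fintype X] [DecidableEq X] (y : X) : L2 X :=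
  EuclideanSpace.single y (1:ℂ)

/-- The rank-one projection onto the indicator function `δ_y`. -/
def Pproj {X : Type*} [Fintype X] [DecidableEq X] (y : X) : L2 X →L[ℂ] L2 X :=
  (innerSL ℂ (delta y)).smulRight (delta y)

/-- Invariance of an operator under a subgroup, `U_S(h) A U_S(h)⁻¹ = A` for all `h ∈ S`. -/
def InvUnder {G HS : Type*} [Group G] [NormedAddCommGroup HS] [InnerProductSpace ℂ HS]
    (US : G →* (HS →L[ℂ] HS)) (S : Subgroup G) (A : HS →L[ℂ] HS) : Prop :=
  ∀ h ∈ S, US h * A * US h⁻¹ = A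

/-- The relativisation map `¥ₓ`, with canonical coset representatives. -/
def yen {G X HS : Type*} [Group G] [Finite G] [Fintype X] [DecidableEq X] [MulAction G X]
    [NormedAddCommGroup HS] [InnerProductSpace ℂ HS]
    (US : G →* (HS →L[ℂ] HS)) (x : X) (A : HS →L[ℂ] HS) :
    (HS →L[ℂ] HS) ⊗[ℂ] (L2 X →L[ℂ] L2 X) :=
  letI : Fintype (G ⧸ MulAction.stabilizer G x) := Fintype.ofFinite _
  ∑ c : G ⧸ MulAction.stabilizer G x,
    (US c.out * A * US c.out⁻¹) ⊗ₜ[ℂ] Pproj (c.out • x)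

/-- The restriction map `Γ_ω`, determined by `A ⊗ B ↦ tr(ωB) A`. -/
def Gamma {X HS : Type*} [Fintype X] [NormedAddCommGroup HS] [InnerProductSpace ℂ HS]
    (ω : L2 X →L[ℂ] L2 X) :
    (HS →L[ℂ] HS) ⊗[ℂ] (L2 X →L[ℂ] L2 X) →ₗ[ℂ] (HS →L[ℂ] HS) :=
  TensorProduct.lift
    (LinearMap.mk₂ ℂ (fun A B => (LinearMap.trace ℂ (L2 X) ↑(ω * B)) • A)
      (fun A₁ A₂ B => by simp [smul_add])
      (fun c A B => by simp [smul_smul]; ring_nf)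
      (fun A B₁ B₂ => by simp [mul_add, add_smul])
      (fun c A B => by simp [mul_smul_comm, smul_smul]))

/-!
Only the summand of `¥ₓ A` indexed by the coset `g G_x` survives `Γ_{P_{g·x}}`: the trace
`tr(P_{g·x} P_{k·x}) = ⟪δ_{g·x}, δ_{k·x}⟫ ⟪δ_{k·x}, δ_{g·x}⟫` vanishes unless `k·x = g·x`, and on that
summand the choice of coset representative is irrelevant because `A` is `G_x`-invariant.
Conjugation by `U(g)` carries `G_x`-invariance to `G_{g·x}`-invariance since `G_{g·x} = g G_x g⁻¹`,
with conjugation by `U(g⁻¹)` as inverse, and since `U(g)` is unitary it is the ⋆-algebra automorphism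
`Unitary.conjStarAlgAut`.
-/

open MulAction
open scoped InnerProductSpace

section Conjugation

variable {G R : Type*} [Group G] [Monoid R] (U : G →* R)

theorem MonoidHom.conj_conj (a b : G) (A : R) :
    U a * (U b * A * U b⁻¹) * U a⁻¹ = U (a * b) * A * U (a * b)⁻¹ := by
  simp only [mul_inv_rev, map_mul, mul_assoc]

theorem MonoidHom.conj_inv_conj (g : G) (A : R) : U g⁻¹ * (U g * A * U g⁻¹) * U g⁻¹⁻¹ = A := by
  rw [conj_conj, inv_mul_cancel, inv_one, map_one, one_mul, mul_one]

def MonoidHom.toUnitary [StarMul R] (hU : ∀ g, star (U g) = U g⁻¹) : G →* unitary R :=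
  U.codRestrict (unitary R) fun g => Unitary.mem_iff.2
    ⟨by rw [hU, ← map_mul, inv_mul_cancel, map_one], by rw [hU, ← map_mul, mul_inv_cancel, map_one]⟩

theorem MonoidHom.conjStarAlgAut_toUnitary_apply {S R : Type*} [Semiring R] [StarMul R]
    [SMul S R] [IsScalarTower S R R] [SMulCommClass S R R] (U : G →* R)
    (hU : ∀ g, star (U g) = U g⁻¹) (g : G) (A : R) :
    Unitary.conjStarAlgAut S R (U.toUnitary hU g) A = U g * A * U g⁻¹ := by
  simp [MonoidHom.toUnitary, hU]

end Conjugation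

section Invariance

variable {G HS : Type*} [Group G] [NormedAddCommGroup HS] [InnerProductSpace ℂ HS]
  {US : G →* (HS →L[ℂ] HS)}

theorem InvUnder.conj_eq_of_inv_mul_mem {S : Subgroup G} {A : HS →L[ℂ] HS}
    (hA : InvUnder US S A) {g k : G} (h : g⁻¹ * k ∈ S) :
    US k * A * US k⁻¹ = US g * A * US g⁻¹ := by
  rw [← mul_inv_cancel_left g k, ← US.conj_conj, hA _ h]

variable {X : Type*} [MulAction G X]

theorem InvUnder.conj_stabilizer_smul {x : X} {A : HS →L[ℂ] HS}
    (hA : InvUnder US (stabilizer G x) A) (g : G) :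
    InvUnder US (stabilizer G (g • x)) (US g * A * US g⁻¹) := by
  intro h hh
  rw [US.conj_conj]
  refine hA.conj_eq_of_inv_mul_mem ?_
  rw [mem_stabilizer_iff, mul_smul, mul_smul, hh, inv_smul_smul]

theorem smul_eq_out_smul_iff {x : X} (g : G) (c : G ⧸ stabilizer G x) :
    g • x = c.out • x ↔ c = g := by
  rw [← ofQuotientStabilizer_mk, ← ofQuotientStabilizer_mk, QuotientGroup.out_eq',
    (injective_ofQuotientStabilizer G x).eq_iff, eq_comm]

variable (US) in
theorem bijOn_conj_invUnder_stabilizer (x : X) (g : G) :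
    Set.BijOn (fun A => US g * A * US g⁻¹) {A | InvUnder US (stabilizer G x) A}
      {A | InvUnder US (stabilizer G (g • x)) A} := by
  refine Set.InvOn.bijOn (f' := fun A => US g⁻¹ * A * US g⁻¹⁻¹)
    ⟨fun A _ => US.conj_inv_conj g A, fun A _ => by simpa using US.conj_inv_conj g⁻¹ A⟩
    (fun A hA => hA.conj_stabilizer_smul g) fun A hA => ?_
  simpa using InvUnder.conj_stabilizer_smul hA g⁻¹

end Invariance

section Relativisation

variable {X : Type*} [Fintype X]

theorem Gamma_tmul {HS : Type*} [NormedAddCommGroup HS] [InnerProductSpace ℂ HS]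
    (ω : L2 X →L[ℂ] L2 X) (A : HS →L[ℂ] HS) (B : L2 X →L[ℂ] L2 X) :
    Gamma ω (A ⊗ₜ B) = LinearMap.trace ℂ (L2 X) ↑(ω * B) • A :=
  rfl

variable [DecidableEq X]

theorem inner_delta_delta (y z : X) : ⟪delta y, delta z⟫_ℂ = if y = z then 1 else 0 := by
  simp [delta, EuclideanSpace.inner_single_left]

theorem trace_Pproj_mul_Pproj (y z : X) :
    LinearMap.trace ℂ (L2 X) ↑(Pproj y * Pproj z) = if y = z then 1 else 0 := by
  change LinearMap.trace ℂ (L2 X) ↑(InnerProductSpace.rankOne ℂ (delta y) (delta y) ∘L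
    InnerProductSpace.rankOne ℂ (delta z) (delta z)) = _
  rw [InnerProductSpace.rankOne_comp_rankOne, ContinuousLinearMap.toLinearMap_smul, map_smul,
    InnerProductSpace.trace_rankOne, inner_delta_delta, inner_delta_delta]
  split_ifs <;> simp_all

theorem Gamma_Pproj_smul_yen {G HS : Type*} [Group G] [Finite G] [MulAction G X]
    [NormedAddCommGroup HS] [InnerProductSpace ℂ HS] {US : G →* (HS →L[ℂ] HS)} {x : X}
    {A : HS →L[ℂ] HS} (hA : InvUnder US (stabilizer G x) A) (g : G) :
    Gamma (Pproj (g • x)) (yen US x A) = US g * A * US g⁻¹ := by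
  let : Fintype (G ⧸ stabilizer G x) := Fintype.ofFinite _
  have hterm (c : G ⧸ stabilizer G x) :
      Gamma (Pproj (g • x)) ((US c.out * A * US c.out⁻¹) ⊗ₜ Pproj (c.out • x)) =
        if c = g then US g * A * US g⁻¹ else 0 := by
    rw [Gamma_tmul, trace_Pproj_mul_Pproj]
    by_cases hc : c = g
    · rw [if_pos ((smul_eq_out_smul_iff g c).2 hc), if_pos hc, one_smul]
      subst hc
      exact hA.conj_eq_of_inv_mul_mem (QuotientGroup.eq.1 (QuotientGroup.out_eq' _).symm)
    · rw [if_neg (mt (smul_eq_out_smul_iff g c).1 hc), if_neg hc, zero_smul]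
  simp only [yen, map_sum, hterm, Finset.sum_ite_eq', Finset.mem_univ, if_true]

end Relativisation

theorem stmt8_general {G X HS : Type*} [Group G] [Finite G] [Fintype X] [DecidableEq X]
    [MulAction G X]
    [NormedAddCommGroup HS] [InnerProductSpace ℂ HS] [CompleteSpace HS]
    (US : G →* (HS →L[ℂ] HS))
    (hU : ∀ g : G, ContinuousLinearMap.adjoint (US g) = US g⁻¹)
    (x : X) (g : G) :
    (∀ A : HS →L[ℂ] HS, InvUnder US (MulAction.stabilizer G x) A →
        Gamma (Pproj (g • x)) (yen US x A) = US g * A * US g⁻¹) ∧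
    Set.BijOn (fun A : HS →L[ℂ] HS => US g * A * US g⁻¹)
      {A | InvUnder US (MulAction.stabilizer G x) A}
      {A | InvUnder US (MulAction.stabilizer G (g • x)) A} ∧
    (∀ A B : HS →L[ℂ] HS,
        US g * (A * B) * US g⁻¹ = (US g * A * US g⁻¹) * (US g * B * US g⁻¹)) ∧
    (US g * (1 : HS →L[ℂ] HS) * US g⁻¹ = 1) ∧
    (∀ A B : HS →L[ℂ] HS, US g * (A + B) * US g⁻¹
        = US g * A * US g⁻¹ + US g * B * US g⁻¹) ∧
    (∀ (c : ℂ) (A : HS →L[ℂ] HS), US g * (c • A) * US g⁻¹ = c • (US g * A * US g⁻¹)) ∧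
    (∀ A : HS →L[ℂ] HS, US g * star A * US g⁻¹ = star (US g * A * US g⁻¹)) := by
  have hstar (k : G) : star (US k) = US k⁻¹ := by rw [ContinuousLinearMap.star_eq_adjoint, hU]
  set Φ := Unitary.conjStarAlgAut ℂ (HS →L[ℂ] HS) (US.toUnitary hstar g)
  have hΦ (A : HS →L[ℂ] HS) : US g * A * US g⁻¹ = Φ A :=
    (US.conjStarAlgAut_toUnitary_apply hstar g A).symm
  refine ⟨fun A hA => Gamma_Pproj_smul_yen hA g, bijOn_conj_invUnder_stabilizer US x g,
    ?_, ?_, ?_, ?_, ?_⟩ <;> simp only [hΦ]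
  exacts [map_mul Φ, map_one Φ, map_add Φ, map_smul Φ, map_star Φ]

/-- `Γ_{P_{g·x}} ∘ ¥ₓ` equals `A ↦ U_S(g) A U_S(g)⁻¹`, a C*-algebra isomorphism
from `B(H_S)^{G_x}` onto `B(H_S)^{G_{g·x}}`. -/
theorem stmt8 {G X HS : Type*} [Group G] [Finite G] [Fintype X] [DecidableEq X]
    [MulAction G X] [MulAction.IsPretransitive G X]
    [NormedAddCommGroup HS] [InnerProductSpace ℂ HS] [CompleteSpace HS]
    (US : G →* (HS →L[ℂ] HS))
    (hU : ∀ g : G, ContinuousLinearMap.adjoint (US g) = US g⁻¹)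
    (x : X) (g : G) :
    (∀ A : HS →L[ℂ] HS, InvUnder US (MulAction.stabilizer G x) A →
        Gamma (Pproj (g • x)) (yen US x A) = US g * A * US g⁻¹) ∧
    Set.BijOn (fun A : HS →L[ℂ] HS => US g * A * US g⁻¹)
      {A | InvUnder US (MulAction.stabilizer G x) A}
      {A | InvUnder US (MulAction.stabilizer G (g • x)) A} ∧
    (∀ A B : HS →L[ℂ] HS,
        US g * (A * B) * US g⁻¹ = (US g * A * US g⁻¹) * (US g * B * US g⁻¹)) ∧
    (US g * (1 : HS →L[ℂ] HS) * US g⁻¹ = 1) ∧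
    (∀ A B : HS →L[ℂ] HS, US g * (A + B) * US g⁻¹
        = US g * A * US g⁻¹ + US g * B * US g⁻¹) ∧
    (∀ (c : ℂ) (A : HS →L[ℂ] HS), US g * (c • A) * US g⁻¹ = c • (US g * A * US g⁻¹)) ∧
    (∀ A : HS →L[ℂ] HS, US g * star A * US g⁻¹ = star (US g * A * US g⁻¹)) :=
  stmt8_general US hU x g

end
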